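/- Let m be a natural number with 1 ≤ m ≤ 5 and define m uniformly spaced ring lights at elevation 45° by l_k = (cos(2πk/m)/√2, sin(2πk/m)/√2, 1/√2) for k = 0, 1, …, m − 1. Then there exists a unit vector n ∈ ℝ³ with n₃ > 0 such that the number of indices k with ⟪n, l_k⟫ > 0 is at most 2. Hence six is the minimum number of uniformly spaced ring lights guaranteeing that every point of the open upper hemisphere is illuminated by at least three lights. -/

import Mathlib

/-! Tilt the normal towards the azimuth `π / m` midway between lights `0` and `1`, at a height
for which a light is lit exactly when its azimuth lies within `3π/5` of `π / m`. For `m ≤ 5`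
the spacing `2π/m` is at least `2π/5`, so every other light is at angular distance at least
`3π/m ≥ 3π/5` from `π / m` and stays dark. -/

open scoped RealInnerProductSpace Classical

noncomputable def ringLight (θ : ℝ) : EuclideanSpace ℝ (Fin 3) :=
  (EuclideanSpace.equiv (Fin 3) ℝ).symm
    ![Real.cos θ / Real.sqrt 2, Real.sin θ / Real.sqrt 2, 1 / Real.sqrt 2]

open Real

lemma Real.cos_le_cos_of_le_of_le_two_pi_sub {a x : ℝ} (ha : 0 ≤ a) (hax : a ≤ x)
    (hx : x ≤ 2 * π - a) : cos x ≤ cos a := by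
  rcases le_total x π with hxπ | hπx
  · exact cos_le_cos_of_nonneg_of_le_pi ha hxπ hax
  · calc cos x = cos (2 * π - x) := by rw [cos_two_pi_sub]
      _ ≤ cos a := cos_le_cos_of_nonneg_of_le_pi ha (by linarith) (by linarith)

lemma inner_ringLight (v : EuclideanSpace ℝ (Fin 3)) (θ : ℝ) :
    ⟪v, ringLight θ⟫ = (v 0 * cos θ + v 1 * sin θ + v 2) / √2 := by
  simp only [ringLight, one_div, PiLp.continuousLinearEquiv_symm_apply, PiLp.inner_apply,
    RCLike.inner_apply, ringHom_apply, Fin.sum_univ_three, Fin.isValue, Matrix.cons_val_zero,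
    Matrix.cons_val_one, Matrix.cons_val]
  ring

lemma exists_unit_normal_forall_inner_ringLight_pos_iff (α : ℝ) {c : ℝ} (hc : 0 < c) :
    ∃ n : EuclideanSpace ℝ (Fin 3), ‖n‖ = 1 ∧ 0 < n 2 ∧
      ∀ θ, 0 < ⟪n, ringLight θ⟫ ↔ -c < cos (θ - α) := by
  set v : EuclideanSpace ℝ (Fin 3) := !₂[cos α, sin α, c]
  have hv : v ≠ 0 := fun h => hc.ne' (congrFun (congrArg (⇑) h) 2)
  have hv_pos : 0 < ‖v‖⁻¹ := inv_pos.2 (norm_pos_iff.2 hv)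
  refine ⟨‖v‖⁻¹ • v, norm_smul_inv_norm hv, mul_pos hv_pos hc, fun θ => ?_⟩
  rw [inner_smul_left, inner_ringLight, conj_trivial, mul_pos_iff_of_pos_left hv_pos,
    div_pos_iff_of_pos_right (sqrt_pos.2 two_pos), cos_sub]
  simp only [v, Matrix.cons_val]
  constructor <;> intro h <;> linarith

lemma cos_azimuth_sub_pi_div_le_cos_three_pi_div_five {m k : ℕ} (hm : m ≤ 5) (hk : 2 ≤ k)
    (hkm : k < m) : cos (2 * π * k / m - π / m) ≤ cos (3 * π / 5) := by
  have hm0 : (0 : ℝ) < m := by exact_mod_cast (show 0 < m by omega)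
  have hk' : (2 : ℝ) ≤ k := by exact_mod_cast hk
  have hkm' : (k : ℝ) + 1 ≤ m := by exact_mod_cast hkm
  have hm' : (m : ℝ) ≤ 5 := by exact_mod_cast hm
  have hx : 2 * π * k / m - π / m = (2 * k - 1) * π / m := by ring
  apply cos_le_cos_of_le_of_le_two_pi_sub (by positivity)
  · rw [hx, le_div_iff₀ hm0]; nlinarith [pi_pos]
  · rw [hx, div_le_iff₀ hm0]; nlinarith [pi_pos]

theorem five_or_fewer_ring_lights_insufficient_general (m : ℕ) (hm5 : m ≤ 5) :
    ∃ n : EuclideanSpace ℝ (Fin 3), ‖n‖ = 1 ∧ 0 < n 2 ∧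
      ((Finset.range m).filter
        (fun k : ℕ => 0 < ⟪n, ringLight (2 * Real.pi * k / m)⟫)).card ≤ 2 := by
  have hc : 0 < -cos (3 * π / 5) :=
    neg_pos.2 (cos_neg_of_pi_div_two_lt_of_lt (by linarith [pi_pos]) (by linarith [pi_pos]))
  obtain ⟨n, hn, hn2, hlit⟩ := exists_unit_normal_forall_inner_ringLight_pos_iff (π / m) hc
  refine ⟨n, hn, hn2,
    le_trans (Finset.card_le_card (t := {0, 1}) fun k hk => ?_) Finset.card_le_two⟩
  rw [Finset.mem_filter, Finset.mem_range, hlit, neg_neg] at hk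
  by_contra hk01
  have hk2 : 2 ≤ k := by simp only [Finset.mem_insert, Finset.mem_singleton] at hk01; omega
  exact hk.2.not_ge (cos_azimuth_sub_pi_div_le_cos_three_pi_div_five hm5 hk2 hk.1)

/-- For every `m` with `1 ≤ m ≤ 5`, the `m` uniformly spaced ring
lights at elevation 45° (azimuths `2πk/m`, `k = 0, …, m−1`) fail to illuminate some
point of the open upper hemisphere three times: there is a unit normal `n` with
`n₃ > 0` illuminated by at most `2` of the lights. -/
theorem five_or_fewer_ring_lights_insufficient (m : ℕ) (hm1 : 1 ≤ m) (hm5 : m ≤ 5) :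
    ∃ n : EuclideanSpace ℝ (Fin 3), ‖n‖ = 1 ∧ 0 < n 2 ∧
      ((Finset.range m).filter
        (fun k : ℕ => 0 < ⟪n, ringLight (2 * Real.pi * k / m)⟫)).card ≤ 2 :=
  five_or_fewer_ring_lights_insufficient_general m hm5
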